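/- arXiv:1103.1255 — 4 statements merged into one kernel-verified Lean document; each statement's English description precedes it below -/
import Mathlib

section
/- Any bounded residuated lattice (L, ⪯, ∧, ∨, ⊗, ⇒, ⊥, ⊤) satisfies the conditions of an annotation domain; that is, (L, ∨, ⊗, ⊥, ⊤) is an idempotent commutative semiring in which ∨ is ⊤-annihilating. -/
/-- An annotation domain: an idempotent commutative semiring
`(L, ⊕, ⊗, ⊥, ⊤)` in which `⊕` is `⊤`-annihilating. -/
structure AnnDom (L : Type*) where
  oplus : L → L → L
  otimes : L → L → L
  bot : L
  top : L
  oplus_idem : ∀ a, oplus a a = a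
  oplus_comm : ∀ a b, oplus a b = oplus b a
  oplus_assoc : ∀ a b c, oplus (oplus a b) c = oplus a (oplus b c)
  otimes_comm : ∀ a b, otimes a b = otimes b a
  otimes_assoc : ∀ a b c, otimes (otimes a b) c = otimes a (otimes b c)
  bot_oplus : ∀ a, oplus bot a = a
  top_otimes : ∀ a, otimes top a = a
  bot_otimes : ∀ a, otimes bot a = bot
  top_oplus : ∀ a, oplus top a = top
  otimes_distrib : ∀ a b c, otimes a (oplus b c) = oplus (otimes a b) (otimes a c)

/-- The induced order: `a ⪯ b` iff `a ⊕ b = b`. -/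
def AnnDom.le {L : Type*} (D : AnnDom L) (a b : L) : Prop := D.oplus a b = b

/-- A bounded residuated lattice
`(L, ⪯, ∧, ∨, ⊗, ⇒, ⊥, ⊤)`. -/
structure ResLat (L : Type*) where
  le : L → L → Prop
  join : L → L → L
  meet : L → L → L
  otimes : L → L → L
  residuum : L → L → L
  bot : L
  top : L
  le_refl : ∀ a, le a a
  le_antisymm : ∀ a b, le a b → le b a → a = b
  le_trans : ∀ a b c, le a b → le b c → le a c
  le_join_left : ∀ a b, le a (join a b)
  le_join_right : ∀ a b, le b (join a b)
  join_le : ∀ a b c, le a c → le b c → le (join a b) c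
  meet_le_left : ∀ a b, le (meet a b) a
  meet_le_right : ∀ a b, le (meet a b) b
  le_meet : ∀ a b c, le c a → le c b → le c (meet a b)
  bot_le : ∀ a, le bot a
  le_top : ∀ a, le a top
  otimes_comm : ∀ a b, otimes a b = otimes b a
  otimes_assoc : ∀ a b c, otimes (otimes a b) c = otimes a (otimes b c)
  top_otimes : ∀ a, otimes top a = a
  residuation : ∀ a b c, le (otimes a c) b ↔ le c (residuum a b)

/-- Any bounded residuated lattice satisfies the conditions of an annotation
domain: `(L, ∨, ⊗, ⊥, ⊤)` is an idempotent commutative semiring in which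
`∨` is `⊤`-annihilating. -/
theorem stmt4 {L : Type*} (R : ResLat L) :
    ∃ D : AnnDom L,
      D.oplus = R.join ∧ D.otimes = R.otimes ∧ D.bot = R.bot ∧ D.top = R.top := by

  classical
  -- monotonicity of ⊗ in the right argument
  have mono : ∀ a b c : L, R.le b c → R.le (R.otimes a b) (R.otimes a c) := by
    intro a b c h
    have h1 : R.le c (R.residuum a (R.otimes a c)) :=
      (R.residuation a (R.otimes a c) c).mp (R.le_refl _)
    exact (R.residuation a (R.otimes a c) b).mpr (R.le_trans _ _ _ h h1)
  have joinle : ∀ a b c : L, R.le a b → a = c → R.le c b := by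
    intro a b c h e; exact e ▸ h
  refine ⟨{
    oplus := R.join, otimes := R.otimes, bot := R.bot, top := R.top,
    oplus_idem := fun a => R.le_antisymm _ _ (R.join_le _ _ _ (R.le_refl a) (R.le_refl a)) (R.le_join_left _ _),
    oplus_comm := fun a b => R.le_antisymm _ _
      (R.join_le _ _ _ (R.le_join_right _ _) (R.le_join_left _ _))
      (R.join_le _ _ _ (R.le_join_right _ _) (R.le_join_left _ _)),
    oplus_assoc := fun a b c => R.le_antisymm _ _
      (R.join_le _ _ _
        (R.join_le _ _ _ (R.le_join_left _ _)
          (R.le_trans _ _ _ (R.le_join_left _ _) (R.le_join_right _ _)))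
        (R.le_trans _ _ _ (R.le_join_right _ _) (R.le_join_right _ _)))
      (R.join_le _ _ _
        (R.le_trans _ _ _ (R.le_join_left _ _) (R.le_join_left _ _))
        (R.join_le _ _ _
          (R.le_trans _ _ _ (R.le_join_right _ _) (R.le_join_left _ _))
          (R.le_join_right _ _))),
    otimes_comm := R.otimes_comm,
    otimes_assoc := R.otimes_assoc,
    bot_oplus := fun a => R.le_antisymm _ _
      (R.join_le _ _ _ (R.bot_le a) (R.le_refl a)) (R.le_join_right _ _),
    top_otimes := R.top_otimes,
    bot_otimes := fun a => by
      have h : R.le (R.otimes a R.bot) R.bot :=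
        (R.residuation a R.bot R.bot).mpr (R.bot_le _)
      have := R.otimes_comm R.bot a
      exact R.le_antisymm _ _ (this ▸ h) (R.bot_le _),
    top_oplus := fun a => R.le_antisymm _ _ (R.le_top _) (R.le_join_left _ _),
    otimes_distrib := fun a b c => by
      apply R.le_antisymm
      · have hb : R.le b (R.residuum a (R.join (R.otimes a b) (R.otimes a c))) :=
          (R.residuation a _ b).mp (R.le_join_left _ _)
        have hc : R.le c (R.residuum a (R.join (R.otimes a b) (R.otimes a c))) :=
          (R.residuation a _ c).mp (R.le_join_right _ _)
        exact (R.residuation a _ _).mpr (R.join_le _ _ _ hb hc)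
      · exact R.join_le _ _ _ (mono a b (R.join b c) (R.le_join_left _ _))
          (mono a c (R.join b c) (R.le_join_right _ _)) }, rfl, rfl, rfl, rfl⟩
end

section
/- For a finite set A ⊆ L₁ × L₂ and z, z' ∈ L₁, with K^A_z = {J ⊆ A | z ⪯₁ ⊕₁_{(x,y)∈J} x}, it holds that K^A_{z⊕₁z'} = {J ∪ J' | (J, J') ∈ K^A_z × K^A_{z'}}. -/
open Classical in
/-- The join `⊕₁` of the first coordinates of the pairs in `J` (`⊥₁` if empty). -/
noncomputable def joinFst {L1 L2 : Type*} (D1 : AnnDom L1) (J : Finset (L1 × L2)) : L1 :=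
  haveI : Std.Commutative D1.oplus := ⟨D1.oplus_comm⟩
  haveI : Std.Associative D1.oplus := ⟨D1.oplus_assoc⟩
  J.fold D1.oplus D1.bot Prod.fst

open Classical in
/-- `K^A_z = {J ⊆ A | z ⪯₁ ⊕₁_{(x,y)∈J} x}`. -/
noncomputable def Kset {L1 L2 : Type*} (D1 : AnnDom L1) (A : Finset (L1 × L2))
    (z : L1) : Finset (Finset (L1 × L2)) :=
  A.powerset.filter (fun J => D1.le z (joinFst D1 J))

lemma AnnDom.le_trans {L : Type*} (D : AnnDom L) {a b c : L}
    (h1 : D.le a b) (h2 : D.le b c) : D.le a c := by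
  unfold AnnDom.le at *
  calc D.oplus a c = D.oplus a (D.oplus b c) := by rw [h2]
    _ = D.oplus (D.oplus a b) c := (D.oplus_assoc a b c).symm
    _ = D.oplus b c := by rw [h1]
    _ = c := h2

lemma AnnDom.le_oplus_left {L : Type*} (D : AnnDom L) (a b : L) :
    D.le a (D.oplus a b) := by
  show D.oplus a (D.oplus a b) = D.oplus a b
  rw [← D.oplus_assoc, D.oplus_idem]

lemma AnnDom.le_oplus_right {L : Type*} (D : AnnDom L) (a b : L) :
    D.le b (D.oplus a b) := by
  rw [D.oplus_comm a b]; exact D.le_oplus_left b a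

lemma AnnDom.oplus_le {L : Type*} (D : AnnDom L) {a b c : L}
    (h1 : D.le a c) (h2 : D.le b c) : D.le (D.oplus a b) c := by
  show D.oplus (D.oplus a b) c = c
  rw [D.oplus_assoc, h2, h1]

open Classical in
lemma joinFst_insert {L1 L2 : Type*} (D1 : AnnDom L1) (a : L1 × L2)
    (J : Finset (L1 × L2)) (ha : a ∉ J) :
    joinFst D1 (insert a J) = D1.oplus a.1 (joinFst D1 J) := by
  haveI : Std.Commutative D1.oplus := ⟨D1.oplus_comm⟩
  haveI : Std.Associative D1.oplus := ⟨D1.oplus_assoc⟩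
  unfold joinFst
  exact Finset.fold_insert ha

open Classical in
lemma joinFst_le_of_mem {L1 L2 : Type*} (D1 : AnnDom L1) {a : L1 × L2}
    {J : Finset (L1 × L2)} (ha : a ∈ J) : D1.le a.1 (joinFst D1 J) := by
  induction J using Finset.induction with
  | empty => simp at ha
  | @insert b s hb ih =>
    rw [joinFst_insert D1 b s hb]
    rcases Finset.mem_insert.mp ha with rfl | h
    · exact D1.le_oplus_left _ _
    · exact D1.le_trans (ih h) (D1.le_oplus_right _ _)

open Classical in
lemma joinFst_union {L1 L2 : Type*} (D1 : AnnDom L1) (J J' : Finset (L1 × L2)) :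
    joinFst D1 (J ∪ J') = D1.oplus (joinFst D1 J) (joinFst D1 J') := by
  induction J using Finset.induction with
  | empty =>
    simp only [Finset.empty_union]
    show joinFst D1 J' = D1.oplus (joinFst D1 ∅) (joinFst D1 J')
    have : joinFst D1 (∅ : Finset (L1 × L2)) = D1.bot := rfl
    rw [this, D1.bot_oplus]
  | @insert a s ha ih =>
    by_cases haJ' : a ∈ J'
    · have hins : insert a s ∪ J' = s ∪ J' := by
        rw [Finset.insert_union, Finset.insert_eq_self.mpr (Finset.mem_union_right s haJ')]
      rw [hins, ih, joinFst_insert D1 a s ha, D1.oplus_assoc]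
      exact (D1.le_trans (joinFst_le_of_mem D1 haJ') (D1.le_oplus_right _ _)).symm
    · have hins : insert a s ∪ J' = insert a (s ∪ J') := by
        rw [Finset.insert_union]
      rw [hins, joinFst_insert D1 a _ (by simp [ha, haJ']),
        joinFst_insert D1 a s ha, ih, D1.oplus_assoc]

open Classical in
/-- `K^A_{z ⊕₁ z'} = { J ∪ J' | (J, J') ∈ K^A_z × K^A_{z'} }`. -/
theorem stmt10 {L1 L2 : Type*} (D1 : AnnDom L1) (A : Finset (L1 × L2)) (z z' : L1) :
    Kset D1 A (D1.oplus z z') =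
      (Kset D1 A z ×ˢ Kset D1 A z').image (fun p => p.1 ∪ p.2) := by
  ext J
  simp only [Kset, Finset.mem_filter, Finset.mem_powerset, Finset.mem_image,
    Finset.mem_product, Prod.exists]
  constructor
  · rintro ⟨hJA, hle⟩
    refine ⟨J, J, ⟨⟨hJA, ?_⟩, ⟨hJA, ?_⟩⟩, by simp⟩
    · exact D1.le_trans (D1.le_oplus_left z z') hle
    · exact D1.le_trans (D1.le_oplus_right z z') hle
  · rintro ⟨J1, J2, ⟨⟨h1A, h1⟩, ⟨h2A, h2⟩⟩, rfl⟩
    refine ⟨Finset.union_subset h1A h2A, ?_⟩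
    rw [joinFst_union]
    exact D1.oplus_le
      (D1.le_trans h1 (D1.le_oplus_left _ _))
      (D1.le_trans h2 (D1.le_oplus_right _ _))
end

section
/- Let A ⊆ L₁ × L₂ be a finite set and define Ā(z) = ⊕₂_{J ∈ K^A_z} (⊗₂_{(x,y)∈J} y), where K^A_z = {J ⊆ A | z ⪯₁ ⊕₁_{(x,y)∈J} x}. Then for all z, z' ∈ L₁, Ā(z ⊗₁ z') ⪰₂ Ā(z) ⊕₂ Ā(z'). -/
open Classical in
/-- `Ā(z) = ⊕₂_{J ∈ K^A_z} (⊗₂_{(x,y)∈J} y)` (empty join is `⊥₂`, empty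
product is `⊤₂`). -/
noncomputable def Abar {L1 L2 : Type*} (D1 : AnnDom L1) (D2 : AnnDom L2)
    (A : Finset (L1 × L2)) (z : L1) : L2 :=
  haveI : Std.Commutative D2.oplus := ⟨D2.oplus_comm⟩
  haveI : Std.Associative D2.oplus := ⟨D2.oplus_assoc⟩
  haveI : Std.Commutative D2.otimes := ⟨D2.otimes_comm⟩
  haveI : Std.Associative D2.otimes := ⟨D2.otimes_assoc⟩
  (Kset D1 A z).fold D2.oplus D2.bot (fun J => J.fold D2.otimes D2.top Prod.snd)


section Helpers
variable {L : Type*} (D : AnnDom L)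

theorem AnnDom.le_trans_s13 {a b c : L} (hab : D.le a b) (hbc : D.le b c) : D.le a c := by
  unfold AnnDom.le at *
  rw [← hbc, ← D.oplus_assoc, hab]

theorem AnnDom.otimes_le_left (a b : L) : D.le (D.otimes a b) a := by
  unfold AnnDom.le
  calc D.oplus (D.otimes a b) a
      = D.otimes a (D.oplus b D.top) := by
        rw [D.otimes_distrib]
        congr 1
        rw [D.otimes_comm, D.top_otimes]
    _ = a := by rw [D.oplus_comm, D.top_oplus, D.otimes_comm, D.top_otimes]

theorem AnnDom.le_fold_subset {α : Type*} (f : α → L) {S T : Finset α} (h : S ⊆ T) :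
    haveI : Std.Commutative D.oplus := ⟨D.oplus_comm⟩
    haveI : Std.Associative D.oplus := ⟨D.oplus_assoc⟩
    D.le (S.fold D.oplus D.bot f) (T.fold D.oplus D.bot f) := by
  haveI : Std.Commutative D.oplus := ⟨D.oplus_comm⟩
  haveI : Std.Associative D.oplus := ⟨D.oplus_assoc⟩
  classical
  have hT : T = S.disjUnion (T \ S) (Finset.disjoint_sdiff) := by
    rw [Finset.disjUnion_eq_union, Finset.union_sdiff_of_subset h]
  have hfold := Finset.fold_disjUnion (op := D.oplus) (f := f)
    (b₁ := D.bot) (b₂ := D.bot) (Finset.disjoint_sdiff (s := S) (t := T))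
  rw [D.bot_oplus] at hfold
  unfold AnnDom.le
  rw [hT, hfold, ← D.oplus_assoc, D.oplus_idem]

end Helpers
/-- `Ā(z ⊗₁ z') ⪰₂ Ā(z) ⊕₂ Ā(z')`. -/
theorem stmt13 {L1 L2 : Type*} (D1 : AnnDom L1) (D2 : AnnDom L2)
    (A : Finset (L1 × L2)) (z z' : L1) :
    D2.le (D2.oplus (Abar D1 D2 A z) (Abar D1 D2 A z'))
      (Abar D1 D2 A (D1.otimes z z')) := by
  haveI : Std.Commutative D2.oplus := ⟨D2.oplus_comm⟩
  haveI : Std.Associative D2.oplus := ⟨D2.oplus_assoc⟩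
  classical
  have key : ∀ w w' : L1,
      D2.le (Abar D1 D2 A w) (Abar D1 D2 A (D1.otimes w w')) := by
    intro w w'
    have hsub : Kset D1 A w ⊆ Kset D1 A (D1.otimes w w') := by
      intro J hJ
      simp only [Kset, Finset.mem_filter, Finset.mem_powerset] at *
      exact ⟨hJ.1, D1.le_trans_s13 (D1.otimes_le_left w w') hJ.2⟩
    exact D2.le_fold_subset _ hsub
  have h1 : D2.le (Abar D1 D2 A z) (Abar D1 D2 A (D1.otimes z z')) :=
    key z z'
  have h2 : D2.le (Abar D1 D2 A z') (Abar D1 D2 A (D1.otimes z z')) := by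
    have hsub : Kset D1 A z' ⊆ Kset D1 A (D1.otimes z z') := by
      intro J hJ
      simp only [Kset, Finset.mem_filter, Finset.mem_powerset] at *
      refine ⟨hJ.1, D1.le_trans_s13 ?_ hJ.2⟩
      rw [D1.otimes_comm]
      exact D1.otimes_le_left z' z
    exact D2.le_fold_subset _ hsub
  unfold AnnDom.le at *
  rw [D2.oplus_assoc, h2, h1]
end

section
/- For a finite set A ⊆ L₁ × L₂, the function Ā defined by Ā(z) = ⊕₂_{J ∈ K^A_z} (⊗₂_{(x,y)∈J} y), with K^A_z = {J ⊆ A | z ⪯₁ ⊕₁_{(x,y)∈J} x}, is a quasihomomorphism from D₁ to D₂. -/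
/-- `f : L₁ → L₂` is a quasihomomorphism between annotation domains:
`f(x ⊕₁ y) ⪰₂ f(x) ⊗₂ f(y)` and `f(x ⊗₁ y) ⪰₂ f(x) ⊕₂ f(y)`. -/
def IsQHom {L1 L2 : Type*} (D1 : AnnDom L1) (D2 : AnnDom L2) (f : L1 → L2) : Prop :=
  (∀ x y, D2.le (D2.otimes (f x) (f y)) (f (D1.oplus x y))) ∧
  (∀ x y, D2.le (D2.oplus (f x) (f y)) (f (D1.otimes x y)))

/-!
`Ā` is antitone, since `K^A_z` shrinks as `z` grows; as `x ⊗ y` lies below both `x` and `y`,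
this gives the second inequality. For the first, distribute `Ā(x) ⊗ Ā(y)` into the products
`(⊗ J) ⊗ (⊗ J')` with `J ∈ K^A_x`, `J' ∈ K^A_y`: then `J ∪ J' ∈ K^A_{x ⊕ y}`, and
`(⊗ J) ⊗ (⊗ J') = (⊗ (J ∪ J')) ⊗ (⊗ (J ∩ J')) ⪯ ⊗ (J ∪ J')`.
-/

namespace AnnDom

variable {L : Type*} (D : AnnDom L)

theorem le_trans_s14 {a b c : L} (hab : D.le a b) (hbc : D.le b c) : D.le a c := by
  unfold AnnDom.le at *
  rw [← hbc, ← D.oplus_assoc, hab]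

theorem bot_le (a : L) : D.le D.bot a := D.bot_oplus a

theorem oplus_le_s14 {a b c : L} (hac : D.le a c) (hbc : D.le b c) : D.le (D.oplus a b) c := by
  unfold AnnDom.le at *
  rw [D.oplus_assoc, hbc, hac]

theorem le_oplus_left_s14 (a b : L) : D.le a (D.oplus a b) := by
  unfold AnnDom.le
  rw [← D.oplus_assoc, D.oplus_idem]

theorem otimes_le_left_s14 (a b : L) : D.le (D.otimes a b) a := by
  have h : D.oplus (D.otimes a b) (D.otimes a D.top) = D.otimes a D.top := by
    rw [← D.otimes_distrib, D.oplus_comm, D.top_oplus]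
  rwa [D.otimes_comm a D.top, D.top_otimes] at h

theorem otimes_le_right (a b : L) : D.le (D.otimes a b) b :=
  D.otimes_comm a b ▸ D.otimes_le_left_s14 b a

noncomputable def fsum {ι : Type*} (S : Finset ι) (f : ι → L) : L :=
  haveI : Std.Commutative D.oplus := ⟨D.oplus_comm⟩
  haveI : Std.Associative D.oplus := ⟨D.oplus_assoc⟩
  S.fold D.oplus D.bot f

noncomputable def fprod {ι : Type*} (S : Finset ι) (f : ι → L) : L :=
  haveI : Std.Commutative D.otimes := ⟨D.otimes_comm⟩
  haveI : Std.Associative D.otimes := ⟨D.otimes_assoc⟩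
  S.fold D.otimes D.top f

section fsum

variable {ι : Type*}

theorem fsum_empty (f : ι → L) : D.fsum ∅ f = D.bot := rfl

theorem fsum_insert [DecidableEq ι] {S : Finset ι} {a : ι} (ha : a ∉ S) (f : ι → L) :
    D.fsum (insert a S) f = D.oplus (f a) (D.fsum S f) :=
  haveI : Std.Commutative D.oplus := ⟨D.oplus_comm⟩
  haveI : Std.Associative D.oplus := ⟨D.oplus_assoc⟩
  Finset.fold_insert ha

theorem le_fsum_of_mem {S : Finset ι} {a : ι} (ha : a ∈ S) (f : ι → L) :
    D.le (f a) (D.fsum S f) := by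
  classical
  rw [← Finset.insert_erase ha, D.fsum_insert (Finset.notMem_erase a S)]
  exact D.le_oplus_left_s14 _ _

theorem fsum_le {S : Finset ι} {f : ι → L} {c : L} (h : ∀ a ∈ S, D.le (f a) c) :
    D.le (D.fsum S f) c := by
  classical
  induction S using Finset.induction_on with
  | empty => exact D.bot_le c
  | insert a S ha ih =>
    rw [D.fsum_insert ha]
    exact D.oplus_le_s14 (h a (Finset.mem_insert_self a S))
      (ih fun b hb => h b (Finset.mem_insert_of_mem hb))

theorem fsum_mono {S T : Finset ι} (hST : S ⊆ T) (f : ι → L) :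
    D.le (D.fsum S f) (D.fsum T f) :=
  D.fsum_le fun _ ha => D.le_fsum_of_mem (hST ha) f

theorem otimes_fsum (b : L) (S : Finset ι) (f : ι → L) :
    D.otimes b (D.fsum S f) = D.fsum S (fun a => D.otimes b (f a)) := by
  classical
  induction S using Finset.induction_on with
  | empty => rw [fsum_empty, fsum_empty, D.otimes_comm, D.bot_otimes]
  | insert a S ha ih => rw [D.fsum_insert ha, D.fsum_insert ha, D.otimes_distrib, ih]

theorem fsum_otimes_fsum_le {κ : Type*} {S : Finset ι} {T : Finset κ}
    {f : ι → L} {g : κ → L} {c : L} (h : ∀ a ∈ S, ∀ b ∈ T, D.le (D.otimes (f a) (g b)) c) :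
    D.le (D.otimes (D.fsum S f) (D.fsum T g)) c := by
  rw [D.otimes_comm, D.otimes_fsum]
  refine D.fsum_le fun a ha => ?_
  rw [D.otimes_comm, D.otimes_fsum]
  exact D.fsum_le fun b hb => h a ha b hb

theorem fprod_otimes_fprod_le [DecidableEq ι] (J J' : Finset ι) (f : ι → L) :
    D.le (D.otimes (D.fprod J f) (D.fprod J' f)) (D.fprod (J ∪ J') f) := by
  have : Std.Commutative D.otimes := ⟨D.otimes_comm⟩
  have : Std.Associative D.otimes := ⟨D.otimes_assoc⟩
  have hsplit : D.otimes (D.fprod (J ∪ J') f) (D.fprod (J ∩ J') f) =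
      D.otimes (D.fprod J f) (D.fprod J' f) :=
    Finset.fold_union_inter
  rw [← hsplit]
  exact D.otimes_le_left_s14 _ _

end fsum

end AnnDom

section Abar

variable {L1 L2 : Type*} {D1 : AnnDom L1} {A : Finset (L1 × L2)}

theorem mem_Kset {z : L1} {J : Finset (L1 × L2)} :
    J ∈ Kset D1 A z ↔ J ⊆ A ∧ D1.le z (D1.fsum J Prod.fst) := by
  classical
  rw [Kset, Finset.mem_filter, Finset.mem_powerset]
  rfl

theorem union_mem_Kset {x y : L1} {J J' : Finset (L1 × L2)} [DecidableEq (L1 × L2)]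
    (hJ : J ∈ Kset D1 A x) (hJ' : J' ∈ Kset D1 A y) : J ∪ J' ∈ Kset D1 A (D1.oplus x y) := by
  rw [mem_Kset] at *
  exact ⟨Finset.union_subset hJ.1 hJ'.1, D1.oplus_le_s14
    (D1.le_trans_s14 hJ.2 (D1.fsum_mono Finset.subset_union_left _))
    (D1.le_trans_s14 hJ'.2 (D1.fsum_mono Finset.subset_union_right _))⟩

theorem Kset_anti {z w : L1} (hzw : D1.le z w) : Kset D1 A w ⊆ Kset D1 A z := fun J hJ => by
  rw [mem_Kset] at *
  exact ⟨hJ.1, D1.le_trans_s14 hzw hJ.2⟩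

theorem Abar_eq_fsum (D2 : AnnDom L2) (z : L1) :
    Abar D1 D2 A z = D2.fsum (Kset D1 A z) (fun J => D2.fprod J Prod.snd) := rfl

theorem Abar_anti (D2 : AnnDom L2) {z w : L1} (hzw : D1.le z w) :
    D2.le (Abar D1 D2 A w) (Abar D1 D2 A z) := by
  rw [Abar_eq_fsum, Abar_eq_fsum]
  exact D2.fsum_mono (Kset_anti hzw) _

end Abar

/-- For a finite set `A ⊆ L₁ × L₂`, the induced function `Ā` is a
quasihomomorphism from `D₁` to `D₂`. -/
theorem stmt14 {L1 L2 : Type*} (D1 : AnnDom L1) (D2 : AnnDom L2)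
    (A : Finset (L1 × L2)) :
    IsQHom D1 D2 (Abar D1 D2 A) := by
  classical
  refine ⟨fun x y => ?_, fun x y => ?_⟩
  · rw [Abar_eq_fsum, Abar_eq_fsum, Abar_eq_fsum]
    refine D2.fsum_otimes_fsum_le fun J hJ J' hJ' => ?_
    exact D2.le_trans_s14 (D2.fprod_otimes_fprod_le J J' Prod.snd)
      (D2.le_fsum_of_mem (union_mem_Kset hJ hJ') _)
  · exact D2.oplus_le_s14 (Abar_anti D2 (D1.otimes_le_left_s14 x y))
      (Abar_anti D2 (D1.otimes_le_right x y))
end
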